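/- arXiv:2104.08858 — 6 statements merged into one kernel-verified Lean document; each statement's English description precedes it below -/
import Mathlib

section
/- Let n ≥ 5 and for each pair 3 ≤ i < j ≤ n let (c_{ij}, c'_{ij}) ∈ ℂ² satisfy c_{ij} ≠ 0, c'_{ij} ≠ 0 and c_{ij} ≠ c'_{ij}. Then the following are equivalent: (a) the cubic relations c'_{ij}·c_{ik}·c'_{jk} = c_{ij}·c'_{ik}·c_{jk} hold for all triples 3 ≤ i < j < k ≤ n; (b) for all 4 ≤ i < j ≤ n one has c_{ij}·c_{3i}·c'_{3j} = c'_{ij}·c'_{3i}·c_{3j} (i.e. (c_{ij}:c'_{ij}) = (c'_{3i}·c_{3j} : c_{3i}·c'_{3j}) in ℂP^1) and c_{3i}·c'_{3j} ≠ c'_{3i}·c_{3j} (i.e. the points (c_{3i}:c'_{3i}), 4 ≤ i ≤ n, are pairwise distinct in ℂP^1). -/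
/-!
Writing `r i j = c i j / c' i j`, the cubic relation for `i < j < k` says `r i k = r i j * r j k`,
so the whole family is determined by the ratios `r 3 i` through `r i j = r 3 j / r 3 i`, which is
relation (b). The condition `c i j ≠ c' i j`, i.e. `r i j ≠ 1`, then says that the `r 3 i` are
pairwise distinct.
-/

section CrossRelations

variable {R : Type*} [CommRing R] [IsDomain R]

theorem mul_ne_mul_of_cross_eq_of_ne {a a' x x' y y' : R}
    (hrel : a * (x * y') = a' * (x' * y)) (ha : a ≠ a') (hxy' : x * y' ≠ 0) :
    x * y' ≠ x' * y := by
  intro heq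
  rw [← heq] at hrel
  exact ha (mul_right_cancel₀ hxy' hrel)

theorem cubic_relation_of_cross_eq {a a' b b' d d' x x' y y' z z' : R}
    (hx : x ≠ 0) (hy : y ≠ 0) (hy' : y' ≠ 0) (hz' : z' ≠ 0)
    (hxy : a * (x * y') = a' * (x' * y)) (hxz : b * (x * z') = b' * (x' * z))
    (hyz : d * (y * z') = d' * (y' * z)) :
    a' * b * d' = a * b' * d := by
  have hD : x * y' * (y * z') ≠ 0 := by positivity
  apply mul_right_cancel₀ hD
  linear_combination a' * d' * y * y' * hxz - b' * d * y * z' * hxy - a' * b' * x' * y * hyz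

end CrossRelations

theorem statement1_general (n : ℕ) (c c' : ℕ → ℕ → ℂ)
    (h : ∀ i j, 3 ≤ i → i < j → j ≤ n →
      c i j ≠ 0 ∧ c' i j ≠ 0 ∧ c i j ≠ c' i j) :
    (∀ i j k, 3 ≤ i → i < j → j < k → k ≤ n →
      c' i j * c i k * c' j k = c i j * c' i k * c j k) ↔
    (∀ i j, 4 ≤ i → i < j → j ≤ n →
      c i j * (c 3 i * c' 3 j) = c' i j * (c' 3 i * c 3 j) ∧
      c 3 i * c' 3 j ≠ c' 3 i * c 3 j) := by
  constructor
  · intro hcubic i j hi hij hjn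
    have hrel : c i j * (c 3 i * c' 3 j) = c' i j * (c' 3 i * c 3 j) := by
      linear_combination -hcubic 3 i j le_rfl (by omega) hij hjn
    refine ⟨hrel, mul_ne_mul_of_cross_eq_of_ne hrel (h i j (by omega) hij hjn).2.2 ?_⟩
    exact mul_ne_zero (h 3 i le_rfl (by omega) (by omega)).1 (h 3 j le_rfl (by omega) hjn).2.1
  · intro hb i j k hi hij hjk hkn
    rcases hi.eq_or_lt with rfl | hi
    · linear_combination -(hb j k (by omega) hjk hkn).1
    · exact cubic_relation_of_cross_eq (h 3 i le_rfl hi (by omega)).1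
        (h 3 j le_rfl (by omega) (by omega)).1 (h 3 j le_rfl (by omega) (by omega)).2.1
        (h 3 k le_rfl (by omega) hkn).2.1 (hb i j hi hij (by omega)).1
        (hb i k hi (by omega) hkn).1 (hb j k (by omega) hjk hkn).1

/-- Let `n ≥ 5` and suppose every pair `(c i j, c' i j)`, `3 ≤ i < j ≤ n`,
satisfies `c i j ≠ 0`, `c' i j ≠ 0`, `c i j ≠ c' i j` (the point `(c i j : c' i j)` of
`ℂP¹` avoids `A = {(0:1),(1:0),(1:1)}`).  Then the cubic relations
`c'_{ij}·c_{ik}·c'_{jk} = c_{ij}·c'_{ik}·c_{jk}` for all `3 ≤ i < j < k ≤ n` hold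
iff for all `4 ≤ i < j ≤ n` one has
`c_{ij}·c_{3i}·c'_{3j} = c'_{ij}·c'_{3i}·c_{3j}` (i.e. `(c_{ij}:c'_{ij}) = (c'_{3i}c_{3j} : c_{3i}c'_{3j})`
in `ℂP¹`) and `c_{3i}·c'_{3j} ≠ c'_{3i}·c_{3j}` (i.e. the points `(c_{3i}:c'_{3i})`,
`4 ≤ i ≤ n`, are pairwise distinct in `ℂP¹`). -/
theorem statement1 (n : ℕ) (hn : 5 ≤ n) (c c' : ℕ → ℕ → ℂ)
    (h : ∀ i j, 3 ≤ i → i < j → j ≤ n →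
      c i j ≠ 0 ∧ c' i j ≠ 0 ∧ c i j ≠ c' i j) :
    (∀ i j k, 3 ≤ i → i < j → j < k → k ≤ n →
      c' i j * c i k * c' j k = c i j * c' i k * c j k) ↔
    (∀ i j, 4 ≤ i → i < j → j ≤ n →
      c i j * (c 3 i * c' 3 j) = c' i j * (c' 3 i * c 3 j) ∧
      c 3 i * c' 3 j ≠ c' 3 i * c 3 j) :=
  statement1_general n c c' h
end

section
/- Let n ≥ 4, N = C(n−2,2), and let F_n ⊆ (ℂP^1)^N be the set of points ((c_{ij}:c'_{ij}))_{3 ≤ i < j ≤ n} satisfying the cubic relations c'_{ij}·c_{ik}·c'_{jk} = c_{ij}·c'_{ik}·c_{jk} for all triples and with every coordinate avoiding A = {(0:1),(1:0),(1:1)}. Then the projection onto the coordinates ((c_{34}:c'_{34}),…,(c_{3n}:c'_{3n})) is a homeomorphism from F_n (with the subspace topology) onto the space (ℂP^1∖A)^{n−3} ∖ Δ, where Δ is the union of the sets {points whose i-th and j-th coordinates coincide} over 4 ≤ i < j ≤ n. -/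
open Projectivization
open scoped LinearAlgebra.Projectivization

/-- The complex projective line `ℂP¹`, with homogeneous coordinates `(c : c')`. -/
abbrev CP1 : Type := Projectivization ℂ (Fin 2 → ℂ)

/-- `ℂP¹` carries the quotient topology coming from `ℂ² ∖ {0}`. -/
noncomputable instance : TopologicalSpace CP1 :=
  inferInstanceAs (TopologicalSpace (Quotient (projectivizationSetoid ℂ (Fin 2 → ℂ))))

lemma v01_ne_zero : (![0, 1] : Fin 2 → ℂ) ≠ 0 := by
  intro h; have := congrFun h 1; simp at this

lemma v10_ne_zero : (![1, 0] : Fin 2 → ℂ) ≠ 0 := by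
  intro h; have := congrFun h 0; simp at this

lemma v11_ne_zero : (![1, 1] : Fin 2 → ℂ) ≠ 0 := by
  intro h; have := congrFun h 0; simp at this

/-- The three special points `A = {(0:1), (1:0), (1:1)}` of `ℂP¹`. -/
noncomputable def setA : Set CP1 :=
  {Projectivization.mk ℂ ![0, 1] v01_ne_zero,
   Projectivization.mk ℂ ![1, 0] v10_ne_zero,
   Projectivization.mk ℂ ![1, 1] v11_ne_zero}

/-- The cubic relation `c'_{ij}·c_{ik}·c'_{jk} = c_{ij}·c'_{ik}·c_{jk}` for points
`x = (c_{ij}:c'_{ij})`, `y = (c_{ik}:c'_{ik})`, `z = (c_{jk}:c'_{jk})` of `ℂP¹`,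
expressed through (arbitrary) homogeneous representatives; the relation is
homogeneous of degree one in each point, hence independent of this choice. -/
def cubicRel (x y z : CP1) : Prop :=
  Projectivization.rep x 1 * Projectivization.rep y 0 * Projectivization.rep z 1
    = Projectivization.rep x 0 * Projectivization.rep y 1 * Projectivization.rep z 0

/-- The index set of pairs `3 ≤ i < j ≤ n`, of cardinality `N = C(n-2, 2)`. -/
def PairIdx (n : ℕ) : Type := {p : ℕ × ℕ // 3 ≤ p.1 ∧ p.1 < p.2 ∧ p.2 ≤ n}

/-- The index set `{4, …, n}` of the coordinates `(c_{34}:c'_{34}), …, (c_{3n}:c'_{3n})`. -/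
def ColIdx (n : ℕ) : Type := {j : ℕ // 4 ≤ j ∧ j ≤ n}

/-- The space of parameters `F_n ⊆ (ℂP¹)^N` of the main stratum: all cubic relations
hold and every coordinate avoids `A`. -/
def FnSet (n : ℕ) : Set (PairIdx n → CP1) :=
  {x | (∀ P, x P ∉ setA) ∧
    ∀ (i j k : ℕ) (h3 : 3 ≤ i) (hij : i < j) (hjk : j < k) (hkn : k ≤ n),
      cubicRel (x ⟨(i, j), h3, hij, le_trans (le_of_lt hjk) hkn⟩)
               (x ⟨(i, k), h3, lt_trans hij hjk, hkn⟩)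
               (x ⟨(j, k), le_trans h3 (le_of_lt hij), hjk, hkn⟩)}

/-- The space `(ℂP¹ ∖ A)^{n-3} ∖ Δ`, where `Δ` is the union of the diagonals
`{x | x i = x j}`, `4 ≤ i < j ≤ n`. -/
def TargetSet (n : ℕ) : Set (ColIdx n → CP1) :=
  {x | ∀ j, x j ∉ setA} \
    ⋃ (i : ColIdx n) (j : ColIdx n) (_ : i.val < j.val), {x | x i = x j}

/-!
In the affine coordinate `t = c'/c`, the points of `ℂP¹ ∖ A` are the `t ∈ ℂ^×` with `t ≠ 1`,
and the cubic relation for `i < j < k` reads `t_{jk} = t_{ik} / t_{ij}`. So a point of `F_n` is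
determined by its row `(t_{3j})_j` through `t_{ij} = t_{3j} / t_{3i}`; conversely these quotients
satisfy every cubic relation, and for `i ≥ 4` the condition `t_{ij} ≠ 1` says exactly
`t_{3i} ≠ t_{3j}`. The inverse map is continuous because `(x, y) ↦ y / x`, which in homogeneous
coordinates is `(c'_x c_y : c_x c'_y)`, lifts to a polynomial map on `(ℂ² ∖ 0)²`, and
`ℂ² ∖ 0 → ℂP¹` is an open quotient map.
-/

theorem IsOpenQuotientMap.continuousOn_iff {X Y Z : Type*} [TopologicalSpace X]
    [TopologicalSpace Y] [TopologicalSpace Z] {f : X → Y} (hf : IsOpenQuotientMap f)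
    {g : Y → Z} {s : Set Y} : ContinuousOn g s ↔ ContinuousOn (g ∘ f) (f ⁻¹' s) := by
  simp only [continuousOn_iff_continuous_domRestrict,
    (hf.restrictPreimage s).isQuotientMap.continuous_iff]
  rfl

theorem Matrix.vecCons_ne_zero_of_ne_zero {R : Type*} [Zero R] {n : ℕ} {a : R}
    {v : Fin n → R} (h : a ≠ 0) : Matrix.vecCons a v ≠ 0 :=
  fun h' => h (congrFun h' 0)

namespace Projectivization

theorem isOpenQuotientMap_quotientMk {K V : Type*} [DivisionRing K] [AddCommGroup V]
    [Module K V] [TopologicalSpace V] [ContinuousConstSMul K V] :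
    IsOpenQuotientMap (Quotient.mk (projectivizationSetoid K V)) := by
  set π := Quotient.mk (projectivizationSetoid K V)
  refine ⟨Quotient.mk_surjective, continuous_quot_mk, fun U hU => ?_⟩
  have hsat : π ⁻¹' (π '' U) = ⋃ a : Kˣ,
      (fun v : {v : V // v ≠ 0} => (⟨(a : K) • v.1, smul_ne_zero a.ne_zero v.2⟩ :
        {v : V // v ≠ 0})) ⁻¹' U := by
    ext v
    simp only [Set.mem_preimage, Set.mem_image, Set.mem_iUnion]
    constructor
    · rintro ⟨u, hu, huv⟩
      obtain ⟨a, ha : a • v.1 = u.1⟩ := Quotient.exact huv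
      refine ⟨a, ?_⟩
      convert hu
      exact ha
    · rintro ⟨a, hv⟩
      exact ⟨_, hv, (mk_eq_mk_iff K _ _ _ v.2).2 ⟨a, rfl⟩⟩
  exact isOpen_coinduced.2 (hsat ▸ isOpen_iUnion fun a =>
    hU.preimage (((continuous_const_smul (a : K)).comp continuous_subtype_val).subtype_mk
      fun v => smul_ne_zero a.ne_zero v.2))

theorem mk_eq_mk_iff_mul_eq_mul {K : Type*} [Field K] {v w : Fin 2 → K} (hv : v ≠ 0)
    (hw : w ≠ 0) : mk K v hv = mk K w hw ↔ v 0 * w 1 = v 1 * w 0 := by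
  rw [mk_eq_mk_iff']
  constructor
  · rintro ⟨a, rfl⟩
    simp only [Pi.smul_apply, smul_eq_mul]; ring
  · intro h
    by_cases hw0 : w 0 = 0
    · have hw1 : w 1 ≠ 0 := fun hw1 => hw (funext (Fin.forall_fin_two.2 ⟨hw0, hw1⟩))
      refine ⟨v 1 / w 1, funext (Fin.forall_fin_two.2 ⟨?_, ?_⟩)⟩ <;>
        simp only [Pi.smul_apply, smul_eq_mul]
      · rw [hw0, mul_zero] at h
        rw [hw0, mul_zero, (mul_eq_zero.1 h).resolve_right hw1]
      · field_simp
    · refine ⟨v 0 / w 0, funext (Fin.forall_fin_two.2 ⟨?_, ?_⟩)⟩ <;>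
        simp only [Pi.smul_apply, smul_eq_mul]
      · field_simp
      · field_simp; linear_combination h

theorem eq_iff_rep_mul_eq_mul {K : Type*} [Field K] (x y : ℙ K (Fin 2 → K)) :
    x = y ↔ x.rep 0 * y.rep 1 = x.rep 1 * y.rep 0 := by
  conv_lhs => rw [← mk_rep x, ← mk_rep y]
  exact mk_eq_mk_iff_mul_eq_mul _ _

end Projectivization

def setCstar : Set CP1 := {x | x.rep 0 ≠ 0 ∧ x.rep 1 ≠ 0}

noncomputable def oneCP1 : CP1 := mk ℂ ![1, 1] v11_ne_zero

theorem mk_mem_setA_iff {v : Fin 2 → ℂ} (hv : v ≠ 0) :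
    mk ℂ v hv ∈ setA ↔ v 0 = 0 ∨ v 1 = 0 ∨ v 0 = v 1 := by
  simp [setA, mk_eq_mk_iff_mul_eq_mul, @eq_comm _ (0 : ℂ)]

theorem mk_mem_setCstar_iff {v : Fin 2 → ℂ} (hv : v ≠ 0) :
    mk ℂ v hv ∈ setCstar ↔ v 0 ≠ 0 ∧ v 1 ≠ 0 := by
  obtain ⟨a, ha⟩ := exists_smul_eq_mk_rep ℂ v hv
  simp [setCstar, ← ha, Units.smul_def, a.ne_zero]

theorem notMem_setA_iff {x : CP1} : x ∉ setA ↔ x ∈ setCstar ∧ x.rep 0 ≠ x.rep 1 := by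
  conv_lhs => rw [← mk_rep x, mk_mem_setA_iff]
  simp only [setCstar, Set.mem_ofPred_eq]
  tauto

theorem oneCP1_mem_setA : oneCP1 ∈ setA := by
  simp [setA, oneCP1]

theorem oneCP1_mem_setCstar : oneCP1 ∈ setCstar := by
  simp [oneCP1, mk_mem_setCstar_iff]

/-- The point `(c'_x c_y : c_x c'_y)`; in the affine coordinate `c'/c` of `ℂ^×` this is `y / x`.
It is a junk value when both entries vanish. -/
noncomputable def ratio (x y : CP1) : CP1 :=
  if h : (![x.rep 1 * y.rep 0, x.rep 0 * y.rep 1] : Fin 2 → ℂ) ≠ 0 then mk ℂ _ h else oneCP1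

theorem ratio_eq_mk {x y : CP1} (h : x.rep 1 * y.rep 0 ≠ 0) :
    ratio x y =
      mk ℂ ![x.rep 1 * y.rep 0, x.rep 0 * y.rep 1] (Matrix.vecCons_ne_zero_of_ne_zero h) :=
  dif_pos _

theorem ratio_mk {v w : Fin 2 → ℂ} (hv : v ≠ 0) (hw : w ≠ 0) (h : v 1 * w 0 ≠ 0) :
    ratio (mk ℂ v hv) (mk ℂ w hw) =
      mk ℂ ![v 1 * w 0, v 0 * w 1] (Matrix.vecCons_ne_zero_of_ne_zero h) := by
  obtain ⟨a, ha⟩ := exists_smul_eq_mk_rep ℂ v hv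
  obtain ⟨b, hb⟩ := exists_smul_eq_mk_rep ℂ w hw
  have h' : (mk ℂ v hv).rep 1 * (mk ℂ w hw).rep 0 ≠ 0 := by
    simpa [← ha, ← hb, Units.smul_def, a.ne_zero, b.ne_zero] using h
  rw [ratio_eq_mk h', mk_eq_mk_iff_mul_eq_mul, ← ha, ← hb]
  simp only [Units.smul_def, Pi.smul_apply, smul_eq_mul, Matrix.cons_val_zero,
    Matrix.cons_val_one]
  ring

theorem cubicRel_iff_eq_ratio {x y z : CP1} (h : x.rep 1 * y.rep 0 ≠ 0) :
    cubicRel x y z ↔ z = ratio x y := by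
  rw [ratio_eq_mk h, ← mk_rep z, mk_eq_mk_iff_mul_eq_mul, mk_rep, cubicRel]
  simp only [Matrix.cons_val_zero, Matrix.cons_val_one]
  constructor <;> intro h <;> linear_combination -h

theorem ratio_mem_setCstar {x y : CP1} (hx : x ∈ setCstar) (hy : y ∈ setCstar) :
    ratio x y ∈ setCstar := by
  rw [ratio_eq_mk (mul_ne_zero hx.2 hy.1), mk_mem_setCstar_iff]
  simp [hx.1, hx.2, hy.1, hy.2]

theorem ratio_mem_setA_iff {x y : CP1} (hx : x ∈ setCstar) (hy : y ∈ setCstar) :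
    ratio x y ∈ setA ↔ x = y := by
  rw [ratio_eq_mk (mul_ne_zero hx.2 hy.1), mk_mem_setA_iff, eq_iff_rep_mul_eq_mul]
  simp [hx.1, hx.2, hy.1, hy.2, eq_comm]

theorem oneCP1_ratio {y : CP1} (hy : y.rep 0 ≠ 0) : ratio oneCP1 y = y := by
  rw [← mk_rep y, oneCP1, ratio_mk _ _ (by simpa using hy), mk_eq_mk_iff_mul_eq_mul]
  simp only [Matrix.cons_val_zero, Matrix.cons_val_one]
  ring

theorem ratio_ratio {x y z : CP1} (hx : x ∈ setCstar) (hy : y ∈ setCstar)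
    (hz : z ∈ setCstar) :
    ratio (ratio x y) (ratio x z) = ratio y z := by
  rw [ratio_eq_mk (mul_ne_zero hx.2 hy.1), ratio_eq_mk (mul_ne_zero hx.2 hz.1), ratio_mk,
    ratio_eq_mk (mul_ne_zero hy.2 hz.1), mk_eq_mk_iff_mul_eq_mul]
  · simp only [Matrix.cons_val_zero, Matrix.cons_val_one]
    ring
  · simp [hx.1, hx.2, hy.2, hz.1]

theorem continuousOn_ratio :
    ContinuousOn (fun p : CP1 × CP1 => ratio p.1 p.2) (setCstar ×ˢ setCstar) := by
  let π : {v : Fin 2 → ℂ // v ≠ 0} → CP1 := fun v => mk ℂ v.1 v.2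
  have hπ : IsOpenQuotientMap π := isOpenQuotientMap_quotientMk
  rw [(hπ.prodMap hπ).continuousOn_iff, continuousOn_iff_continuous_domRestrict]
  let S := Prod.map π π ⁻¹' setCstar ×ˢ setCstar
  have hne (p : S) : p.1.1.1 1 * p.1.2.1 0 ≠ 0 :=
    mul_ne_zero ((mk_mem_setCstar_iff _).1 p.2.1).2 ((mk_mem_setCstar_iff _).1 p.2.2).1
  have hcoord (i : Fin 2) : Continuous fun v : {v : Fin 2 → ℂ // v ≠ 0} => v.1 i :=
    (continuous_apply i).comp continuous_subtype_val
  have h₁ (i : Fin 2) : Continuous fun p : S => p.1.1.1 i :=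
    (hcoord i).comp (continuous_fst.comp continuous_subtype_val)
  have h₂ (i : Fin 2) : Continuous fun p : S => p.1.2.1 i :=
    (hcoord i).comp (continuous_snd.comp continuous_subtype_val)
  have hvec : Continuous fun p : S => ![p.1.1.1 1 * p.1.2.1 0, p.1.1.1 0 * p.1.2.1 1] := by
    fun_prop
  exact (hπ.continuous.comp
    (hvec.subtype_mk fun p => Matrix.vecCons_ne_zero_of_ne_zero (hne p))).congr
      fun p => (ratio_mk _ _ (hne p)).symm

theorem cubicRel_ratio_ratio_ratio {x y z : CP1} (hx : x ∈ setCstar) (hy : y ∈ setCstar)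
    (hz : z ∈ setCstar) : cubicRel (ratio x y) (ratio x z) (ratio y z) :=
  (cubicRel_iff_eq_ratio (mul_ne_zero (ratio_mem_setCstar hx hy).2
    (ratio_mem_setCstar hx hz).1)).2 (ratio_ratio hx hy hz).symm

section Parametrization

variable {n : ℕ}

/-- Row `i = 3` of the matrix `(c_{ij})`, with the convention `c_{33} = (1:1)`, which makes
`c_{ij} = ratio c_{3i} c_{3j}` hold for `i = 3` too. The values outside `[3, n]` are junk. -/
noncomputable def rowThree (y : ColIdx n → CP1) (i : ℕ) : CP1 :=
  if h : 4 ≤ i ∧ i ≤ n then y ⟨i, h⟩ else oneCP1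

theorem rowThree_of_four_le (y : ColIdx n → CP1) {i : ℕ} (h : 4 ≤ i ∧ i ≤ n) :
    rowThree y i = y ⟨i, h⟩ :=
  dif_pos h

theorem rowThree_three (y : ColIdx n → CP1) : rowThree y 3 = oneCP1 :=
  dif_neg (by omega)

theorem continuous_rowThree (i : ℕ) : Continuous fun y : ColIdx n → CP1 => rowThree y i := by
  unfold rowThree
  split_ifs
  exacts [continuous_apply _, continuous_const]

theorem rowThree_mem_setCstar {y : ColIdx n → CP1} (hy : ∀ j, y j ∉ setA) (i : ℕ) :
    rowThree y i ∈ setCstar := by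
  unfold rowThree
  split_ifs
  exacts [(notMem_setA_iff.1 (hy _)).1, oneCP1_mem_setCstar]

theorem rowThree_ne {y : ColIdx n → CP1} (hy : y ∈ TargetSet n) {i j : ℕ} (h3 : 3 ≤ i)
    (hij : i < j) (hjn : j ≤ n) : rowThree y i ≠ rowThree y j := by
  rw [rowThree_of_four_le y ⟨by omega, hjn⟩]
  rcases h3.eq_or_lt with rfl | hi
  · rw [rowThree_three]
    exact fun h => hy.1 _ (h ▸ oneCP1_mem_setA)
  · rw [rowThree_of_four_le y ⟨hi, by omega⟩]
    exact fun h => hy.2 (Set.mem_iUnion₂.2 ⟨_, _, Set.mem_iUnion.2 ⟨hij, h⟩⟩)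

noncomputable def pairsOfRow (y : ColIdx n → CP1) (P : PairIdx n) : CP1 :=
  ratio (rowThree y P.1.1) (rowThree y P.1.2)

def rowOfPairs (x : PairIdx n → CP1) (j : ColIdx n) : CP1 :=
  x ⟨(3, j.1), le_refl 3, lt_of_lt_of_le (by norm_num) j.2.1, j.2.2⟩

theorem pairsOfRow_mem {y : ColIdx n → CP1} (hy : y ∈ TargetSet n) :
    pairsOfRow y ∈ FnSet n := by
  have hC := rowThree_mem_setCstar hy.1
  refine ⟨fun P => ?_, fun i j k _ _ _ _ => cubicRel_ratio_ratio_ratio (hC i) (hC j) (hC k)⟩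
  exact (ratio_mem_setA_iff (hC _) (hC _)).not.2 (rowThree_ne hy P.2.1 P.2.2.1 P.2.2.2)

theorem eq_ratio_of_mem_fnSet {x : PairIdx n → CP1} (hx : x ∈ FnSet n) {i j : ℕ}
    (hi : 4 ≤ i) (hij : i < j) (hjn : j ≤ n) :
    x ⟨(i, j), by omega, hij, hjn⟩ =
      ratio (x ⟨(3, i), le_refl 3, by omega, by omega⟩)
        (x ⟨(3, j), le_refl 3, by omega, hjn⟩) := by
  have hC (k : ℕ) (hk : 3 < k ∧ k ≤ n) : x ⟨(3, k), le_refl 3, hk⟩ ∈ setCstar :=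
    (notMem_setA_iff.1 (hx.1 _)).1
  exact (cubicRel_iff_eq_ratio (mul_ne_zero (hC i ⟨by omega, by omega⟩).2
    (hC j ⟨by omega, hjn⟩).1)).1 (hx.2 3 i j le_rfl (by omega) hij hjn)

theorem rowOfPairs_mem {x : PairIdx n → CP1} (hx : x ∈ FnSet n) :
    rowOfPairs x ∈ TargetSet n := by
  refine ⟨fun j => hx.1 _, fun hdiag => ?_⟩
  simp only [Set.mem_iUnion] at hdiag
  obtain ⟨i, j, hij, he⟩ := hdiag
  have hC (k : ColIdx n) : rowOfPairs x k ∈ setCstar := (notMem_setA_iff.1 (hx.1 _)).1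
  apply hx.1 ⟨(i.1, j.1), le_trans (by norm_num) i.2.1, hij, j.2.2⟩
  rw [eq_ratio_of_mem_fnSet hx i.2.1 hij j.2.2]
  exact (ratio_mem_setA_iff (hC i) (hC j)).2 he

theorem pairsOfRow_rowOfPairs {x : PairIdx n → CP1} (hx : x ∈ FnSet n) :
    pairsOfRow (rowOfPairs x) = x := by
  funext P
  obtain ⟨⟨i, j⟩, h3, hij, hjn⟩ := P
  rcases h3.eq_or_lt with rfl | hi
  · dsimp only [pairsOfRow]
    rw [rowThree_three, rowThree_of_four_le _ ⟨by omega, hjn⟩, oneCP1_ratio]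
    · rfl
    · exact (notMem_setA_iff.1 (hx.1 _)).1.1
  · dsimp only [pairsOfRow]
    rw [rowThree_of_four_le _ ⟨hi, by omega⟩, rowThree_of_four_le _ ⟨by omega, hjn⟩]
    exact (eq_ratio_of_mem_fnSet hx hi hij hjn).symm

theorem rowOfPairs_pairsOfRow {y : ColIdx n → CP1} (hy : y ∈ TargetSet n) :
    rowOfPairs (pairsOfRow y) = y := by
  funext j
  dsimp only [rowOfPairs, pairsOfRow]
  rw [rowThree_three, rowThree_of_four_le _ j.2]
  exact oneCP1_ratio (notMem_setA_iff.1 (hy.1 j)).1.1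

theorem continuous_pairsOfRow : Continuous fun y : TargetSet n => pairsOfRow y.1 :=
  continuous_pi fun _ => continuousOn_ratio.comp_continuous
    (((continuous_rowThree _).comp continuous_subtype_val).prodMk
      ((continuous_rowThree _).comp continuous_subtype_val))
    fun y => ⟨rowThree_mem_setCstar y.2.1 _, rowThree_mem_setCstar y.2.1 _⟩

theorem continuous_rowOfPairs : Continuous fun x : FnSet n => rowOfPairs x.1 :=
  continuous_pi fun _ => (continuous_apply _).comp continuous_subtype_val

noncomputable def fnSetHomeomorph (n : ℕ) : FnSet n ≃ₜ TargetSet n where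
  toFun x := ⟨rowOfPairs x.1, rowOfPairs_mem x.2⟩
  invFun y := ⟨pairsOfRow y.1, pairsOfRow_mem y.2⟩
  left_inv x := Subtype.ext (pairsOfRow_rowOfPairs x.2)
  right_inv y := Subtype.ext (rowOfPairs_pairsOfRow y.2)
  continuous_toFun := continuous_rowOfPairs.subtype_mk _
  continuous_invFun := continuous_pairsOfRow.subtype_mk _

end Parametrization

/-- For `n ≥ 4`, the projection onto the coordinates
`((c_{34}:c'_{34}), …, (c_{3n}:c'_{3n}))` is a homeomorphism from `F_n` (with the
subspace topology) onto `(ℂP¹ ∖ A)^{n-3} ∖ Δ`. -/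
theorem statement2 (n : ℕ) :
    ∃ e : FnSet n ≃ₜ TargetSet n,
      ∀ (x : FnSet n) (j : ColIdx n),
        (e x).val j
          = x.val ⟨(3, j.val),
              le_refl 3, lt_of_lt_of_le (by norm_num) j.2.1, j.2.2⟩ :=
  ⟨fnSetHomeomorph n, fun _ _ => rfl⟩
end

section
/- Let n ≥ 4, fix 3 ≤ j ≤ n, and let z_3,…,z_n, w_3,…,w_n ∈ ℂ be a main-stratum point in the chart M_{12} (z_k ≠ 0, w_k ≠ 0, z_k·w_l ≠ z_l·w_k for k ≠ l), with parameters c_{kl} := z_k·w_l, c'_{kl} := z_l·w_k. Define the chart-M_{1j} coordinates z'_2 = −z_j/w_j, z'_k = (z_k·w_j − z_j·w_k)/w_j, w'_2 = 1/w_j, w'_k = w_k/w_j for k ∈ {3,…,n}∖{j}, and set d_{kl} := z'_k·w'_l, d'_{kl} := z'_l·w'_k. Then for every l ∈ {3,…,n}∖{j}: d_{2l}·(c_{jl} − c'_{jl}) = d'_{2l}·c_{jl}, i.e. (d_{2l}:d'_{2l}) = (c_{jl} : c_{jl} − c'_{jl}); and for all k < l in {3,…,n}∖{j}: d_{kl}·c_{jk}·(c_{jl}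 − c'_{jl}) = d'_{kl}·c_{jl}·(c_{jk} − c'_{jk}), i.e. (d_{kl}:d'_{kl}) = (c_{jl}(c_{jk} − c'_{jk}) : c_{jk}(c_{jl} − c'_{jl})). -/
/-!
Write `Δₖ := c_{jk} - c'_{jk} = z_j w_k - z_k w_j`. The new coordinates are `z'ₖ = -Δₖ / w_j` and
`w'ₖ = w_k / w_j`. Hence both sides of the second identity equal `-z_j w_k w_l Δₖ Δₗ / w_j²`, which is
symmetric in `k` and `l`, and both sides of the first equal `-z_j w_l Δₗ / w_j²`.
-/

section TransitionMap

variable {K : Type*} [Field K]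

theorem chartTransition_param_ratio_two (zj wj zl wl : K) :
    -zj / wj * (wl / wj) * (zj * wl - zl * wj) =
      (zl * wj - zj * wl) / wj * (1 / wj) * (zj * wl) := by
  ring

theorem chartTransition_param_ratio (zj wj zk wk zl wl : K) :
    (zk * wj - zj * wk) / wj * (wl / wj) * (zj * wk * (zj * wl - zl * wj)) =
      (zl * wj - zj * wl) / wj * (wk / wj) * (zj * wl * (zj * wk - zk * wj)) := by
  ring

end TransitionMap

theorem statement5_general (n : ℕ) (j : ℕ)
    (z w : ℕ → ℂ)
    (c c' : ℕ → ℕ → ℂ)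
    (hc : ∀ k l, c k l = z k * w l) (hc' : ∀ k l, c' k l = z l * w k)
    (z' w' : ℕ → ℂ)
    (hz'2 : z' 2 = -z j / w j)
    (hz'k : ∀ k, 3 ≤ k → k ≤ n → k ≠ j → z' k = (z k * w j - z j * w k) / w j)
    (hw'2 : w' 2 = 1 / w j)
    (hw'k : ∀ k, 3 ≤ k → k ≤ n → k ≠ j → w' k = w k / w j)
    (d d' : ℕ → ℕ → ℂ)
    (hd : ∀ k l, d k l = z' k * w' l) (hd' : ∀ k l, d' k l = z' l * w' k) :
    (∀ l, 3 ≤ l → l ≤ n → l ≠ j →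
      d 2 l * (c j l - c' j l) = d' 2 l * c j l) ∧
    (∀ k l, 3 ≤ k → k < l → l ≤ n → k ≠ j → l ≠ j →
      d k l * (c j k * (c j l - c' j l)) = d' k l * (c j l * (c j k - c' j k))) := by
  refine ⟨fun l hl3 hln hlj => ?_, fun k l hk3 hkl hln hkj hlj => ?_⟩
  · simp only [hd, hd', hc, hc', hz'2, hw'2, hz'k l hl3 hln hlj, hw'k l hl3 hln hlj]
    exact chartTransition_param_ratio_two ..
  · have hkn : k ≤ n := by omega
    have hl3 : 3 ≤ l := by omega
    simp only [hd, hd', hc, hc', hz'k k hk3 hkn hkj, hw'k k hk3 hkn hkj, hz'k l hl3 hln hlj,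
      hw'k l hl3 hln hlj]
    exact chartTransition_param_ratio ..

/-- Chart change `M₁₂ → M₁ⱼ` on the space of parameters of the main
stratum (Lemma `jedan`).  For a main-stratum point `z, w` in the chart `M₁₂` with
parameters `c k l = z k * w l`, `c' k l = z l * w k`, the chart-`M₁ⱼ` coordinates
`z'₂ = -zⱼ/wⱼ`, `z'ₖ = (zₖwⱼ - zⱼwₖ)/wⱼ`, `w'₂ = 1/wⱼ`, `w'ₖ = wₖ/wⱼ` have parameters
`d k l = z' k * w' l`, `d' k l = z' l * w' k` satisfying
`(d_{2l}:d'_{2l}) = (c_{jl} : c_{jl} - c'_{jl})` and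
`(d_{kl}:d'_{kl}) = (c_{jl}(c_{jk} - c'_{jk}) : c_{jk}(c_{jl} - c'_{jl}))`,
written as cross-multiplied equalities. -/
theorem statement5 (n : ℕ) (hn : 4 ≤ n) (j : ℕ) (hj3 : 3 ≤ j) (hjn : j ≤ n)
    (z w : ℕ → ℂ)
    (hz : ∀ k, 3 ≤ k → k ≤ n → z k ≠ 0)
    (hw : ∀ k, 3 ≤ k → k ≤ n → w k ≠ 0)
    (hP : ∀ k l, 3 ≤ k → k ≤ n → 3 ≤ l → l ≤ n → k ≠ l → z k * w l ≠ z l * w k)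
    (c c' : ℕ → ℕ → ℂ)
    (hc : ∀ k l, c k l = z k * w l) (hc' : ∀ k l, c' k l = z l * w k)
    (z' w' : ℕ → ℂ)
    (hz'2 : z' 2 = -z j / w j)
    (hz'k : ∀ k, 3 ≤ k → k ≤ n → k ≠ j → z' k = (z k * w j - z j * w k) / w j)
    (hw'2 : w' 2 = 1 / w j)
    (hw'k : ∀ k, 3 ≤ k → k ≤ n → k ≠ j → w' k = w k / w j)
    (d d' : ℕ → ℕ → ℂ)
    (hd : ∀ k l, d k l = z' k * w' l) (hd' : ∀ k l, d' k l = z' l * w' k) :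
    (∀ l, 3 ≤ l → l ≤ n → l ≠ j →
      d 2 l * (c j l - c' j l) = d' 2 l * c j l) ∧
    (∀ k l, 3 ≤ k → k < l → l ≤ n → k ≠ j → l ≠ j →
      d k l * (c j k * (c j l - c' j l)) = d' k l * (c j l * (c j k - c' j k))) :=
  statement5_general n j z w c c' hc hc' z' w' hz'2 hz'k hw'2 hw'k d d' hd hd'
end

section
/- Let n ≥ 4, fix 3 ≤ j ≤ n, and let z_3,…,z_n, w_3,…,w_n ∈ ℂ be a main-stratum point in the chart M_{12} (z_k ≠ 0, w_k ≠ 0, z_k·w_l ≠ z_l·w_k for k ≠ l), with parameters c_{kl} := z_k·w_l, c'_{kl} := z_l·w_k. Define the chart-M_{2j} coordinates z'_1 = −w_j/z_j, z'_k = (z_j·w_k − z_k·w_j)/z_j, w'_1 = 1/z_j, w'_k = z_k/z_j for k ∈ {3,…,n}∖{j}, and set d_{kl} := z'_k·w'_l, d'_{kl} := z'_l·w'_k. Then for every l ∈ {3,…,n}∖{j}: d_{1l}·(c'_{jl} − c_{jl}) = d'_{1l}·c'_{jl}, i.e. (d_{1l}:d'_{1l}) = (c'_{jl} : c'_{jl}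 − c_{jl}); and for all k < l in {3,…,n}∖{j}: d_{kl}·c'_{jk}·(c_{jl} − c'_{jl}) = d'_{kl}·c'_{jl}·(c_{jk} − c'_{jk}), i.e. (d_{kl}:d'_{kl}) = (c'_{jl}(c_{jk} − c'_{jk}) : c'_{jk}(c_{jl} − c'_{jl})). -/
/-! After substituting the transition map, each side of either identity is `z_j⁻²` times one and
the same product of `z_k`, `z_l`, `w_j` and the minors `z_j w_k - z_k w_j`, so both are
identities in any field. -/

section ChartChange

variable {K : Type*} [Field K]

theorem chartChange_param_ratio_one (zj wj zl wl : K) :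
    (-wj / zj * (zl / zj)) * (zl * wj - zj * wl) =
      ((zj * wl - zl * wj) / zj * (1 / zj)) * (zl * wj) := by
  ring

theorem chartChange_param_ratio (zj wj zk wk zl wl : K) :
    ((zj * wk - zk * wj) / zj * (zl / zj)) * (zk * wj * (zj * wl - zl * wj)) =
      ((zj * wl - zl * wj) / zj * (zk / zj)) * (zl * wj * (zj * wk - zk * wj)) := by
  ring

end ChartChange

theorem statement7_general (n : ℕ) (j : ℕ)
    (z w : ℕ → ℂ)
    (c c' : ℕ → ℕ → ℂ)
    (hc : ∀ k l, c k l = z k * w l) (hc' : ∀ k l, c' k l = z l * w k)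
    (z' w' : ℕ → ℂ)
    (hz'1 : z' 1 = -w j / z j)
    (hz'k : ∀ k, 3 ≤ k → k ≤ n → k ≠ j → z' k = (z j * w k - z k * w j) / z j)
    (hw'1 : w' 1 = 1 / z j)
    (hw'k : ∀ k, 3 ≤ k → k ≤ n → k ≠ j → w' k = z k / z j)
    (d d' : ℕ → ℕ → ℂ)
    (hd : ∀ k l, d k l = z' k * w' l) (hd' : ∀ k l, d' k l = z' l * w' k) :
    (∀ l, 3 ≤ l → l ≤ n → l ≠ j →
      d 1 l * (c' j l - c j l) = d' 1 l * c' j l) ∧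
    (∀ k l, 3 ≤ k → k < l → l ≤ n → k ≠ j → l ≠ j →
      d k l * (c' j k * (c j l - c' j l)) = d' k l * (c' j l * (c j k - c' j k))) := by
  constructor
  · intro l h3l hln hlj
    rw [hd, hd', hz'1, hw'1, hz'k l h3l hln hlj, hw'k l h3l hln hlj]
    simp only [hc, hc']
    exact chartChange_param_ratio_one ..
  · intro k l h3k hkl hln hkj hlj
    have h3l : 3 ≤ l := h3k.trans hkl.le
    have hkn : k ≤ n := hkl.le.trans hln
    rw [hd, hd', hz'k k h3k hkn hkj, hw'k k h3k hkn hkj, hz'k l h3l hln hlj, hw'k l h3l hln hlj]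
    simp only [hc, hc']
    exact chartChange_param_ratio ..

/-- Chart change `M₁₂ → M₂ⱼ` on the space of parameters of the main
stratum (Lemma `dva`).  For a main-stratum point `z, w` in the chart `M₁₂` with
parameters `c k l = z k * w l`, `c' k l = z l * w k`, the chart-`M₂ⱼ` coordinates
`z'₁ = -wⱼ/zⱼ`, `z'ₖ = (zⱼwₖ - zₖwⱼ)/zⱼ`, `w'₁ = 1/zⱼ`, `w'ₖ = zₖ/zⱼ` have parameters
`d k l = z' k * w' l`, `d' k l = z' l * w' k` satisfying
`(d_{1l}:d'_{1l}) = (c'_{jl} : c'_{jl} - c_{jl})` and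
`(d_{kl}:d'_{kl}) = (c'_{jl}(c_{jk} - c'_{jk}) : c'_{jk}(c_{jl} - c'_{jl}))`,
written as cross-multiplied equalities. -/
theorem statement7 (n : ℕ) (hn : 4 ≤ n) (j : ℕ) (hj3 : 3 ≤ j) (hjn : j ≤ n)
    (z w : ℕ → ℂ)
    (hz : ∀ k, 3 ≤ k → k ≤ n → z k ≠ 0)
    (hw : ∀ k, 3 ≤ k → k ≤ n → w k ≠ 0)
    (hP : ∀ k l, 3 ≤ k → k ≤ n → 3 ≤ l → l ≤ n → k ≠ l → z k * w l ≠ z l * w k)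
    (c c' : ℕ → ℕ → ℂ)
    (hc : ∀ k l, c k l = z k * w l) (hc' : ∀ k l, c' k l = z l * w k)
    (z' w' : ℕ → ℂ)
    (hz'1 : z' 1 = -w j / z j)
    (hz'k : ∀ k, 3 ≤ k → k ≤ n → k ≠ j → z' k = (z j * w k - z k * w j) / z j)
    (hw'1 : w' 1 = 1 / z j)
    (hw'k : ∀ k, 3 ≤ k → k ≤ n → k ≠ j → w' k = z k / z j)
    (d d' : ℕ → ℕ → ℂ)
    (hd : ∀ k l, d k l = z' k * w' l) (hd' : ∀ k l, d' k l = z' l * w' k) :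
    (∀ l, 3 ≤ l → l ≤ n → l ≠ j →
      d 1 l * (c' j l - c j l) = d' 1 l * c' j l) ∧
    (∀ k l, 3 ≤ k → k < l → l ≤ n → k ≠ j → l ≠ j →
      d k l * (c' j k * (c j l - c' j l)) = d' k l * (c' j l * (c j k - c' j k))) :=
  statement7_general n j z w c c' hc hc' z' w' hz'1 hz'k hw'1 hw'k d d' hd hd'
end

section
/- Let n ≥ 5 and let (c_{3j}, c'_{3j}) ∈ ℂ² be given for 4 ≤ j ≤ n. Define c_{ij} := c'_{3i}·c_{3j} and c'_{ij} := c_{3i}·c'_{3j} for 4 ≤ i < j ≤ n. Then the full family (c_{ij}, c'_{ij}), 3 ≤ i < j ≤ n, satisfies every cubic relation c'_{ij}·c_{ik}·c'_{jk} = c_{ij}·c'_{ik}·c_{jk} for 3 ≤ i < j < k ≤ n. In particular, wherever the map f : (ℂP^1)^{n−3} → (ℂP^1)^N given by ((c_{3j}:c'_{3j}))_j ↦ ((c_{3j}:c'_{3j}))_j ∪ ((c'_{3i}c_{3j} : c_{3i}c'_{3j}))_{4 ≤ i < j ≤ n} is defined, its image lies in F̄_n. -/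
/-! Setting `a₃ = b₃ = 1`, `aᵢ = c'₃ᵢ` and `bᵢ = c₃ᵢ` for `i ≥ 4`, the whole family has the
rank-one form `c_{ij} = aᵢ bⱼ`, `c'_{ij} = bᵢ aⱼ`, and both sides of every cubic relation
are then the same product `aᵢ aⱼ aₖ bᵢ bⱼ bₖ`. -/

theorem cubic_relation_of_rank_one {ι R : Type*} [CommMonoid R] (a b : ι → R)
    (c c' : ι → ι → R) (P : ι → ι → Prop)
    (hc : ∀ p q, P p q → c p q = a p * b q) (hc' : ∀ p q, P p q → c' p q = b p * a q)
    {i j k : ι} (hij : P i j) (hik : P i k) (hjk : P j k) :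
    c' i j * c i k * c' j k = c i j * c' i k * c j k := by
  rw [hc i j hij, hc i k hik, hc j k hjk, hc' i j hij, hc' i k hik, hc' j k hjk]
  ac_rfl

theorem statement12_general (n : ℕ) (c3 c'3 : ℕ → ℂ)
    (c c' : ℕ → ℕ → ℂ)
    (hc3 : ∀ j, 4 ≤ j → j ≤ n → c 3 j = c3 j)
    (hc'3 : ∀ j, 4 ≤ j → j ≤ n → c' 3 j = c'3 j)
    (hc : ∀ i j, 4 ≤ i → i < j → j ≤ n → c i j = c'3 i * c3 j)
    (hc' : ∀ i j, 4 ≤ i → i < j → j ≤ n → c' i j = c3 i * c'3 j) :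
    ∀ i j k, 3 ≤ i → i < j → j < k → k ≤ n →
      c' i j * c i k * c' j k = c i j * c' i k * c j k := by
  let P p q := 3 ≤ p ∧ p < q ∧ q ≤ n
  let a := Function.update c'3 3 1
  let b := Function.update c3 3 1
  have rank_one : ∀ p q, P p q → c p q = a p * b q ∧ c' p q = b p * a q := by
    rintro p q ⟨hp, hpq, hq⟩
    simp only [a, b, Function.update_of_ne (show q ≠ 3 by omega)]
    rcases hp.eq_or_lt with rfl | hp4
    · simp [hc3 q hpq hq, hc'3 q hpq hq]
    · simp only [Function.update_of_ne (show p ≠ 3 by omega)]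
      exact ⟨hc p q hp4 hpq hq, hc' p q hp4 hpq hq⟩
  intro i j k hi hij hjk hk
  exact cubic_relation_of_rank_one a b c c' P (fun p q h ↦ (rank_one p q h).1)
    (fun p q h ↦ (rank_one p q h).2) ⟨hi, hij, by omega⟩ ⟨hi, by omega, hk⟩ ⟨by omega, hjk, hk⟩

/-- Let `n ≥ 5` and let `(c₃ⱼ, c'₃ⱼ) ∈ ℂ²` be given for `4 ≤ j ≤ n`.
Define `c_{ij} := c'₃ᵢ·c₃ⱼ` and `c'_{ij} := c₃ᵢ·c'₃ⱼ` for `4 ≤ i < j ≤ n`.  Then the full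
family `(c_{ij}, c'_{ij})`, `3 ≤ i < j ≤ n`, satisfies every cubic relation
`c'_{ij}·c_{ik}·c'_{jk} = c_{ij}·c'_{ik}·c_{jk}`, `3 ≤ i < j < k ≤ n`; in particular,
wherever the rational map `f : (ℂP¹)^{n-3} → (ℂP¹)^N` is defined, its image lies
in `F̄_n`. -/
theorem statement12 (n : ℕ) (hn : 5 ≤ n) (c3 c'3 : ℕ → ℂ)
    (c c' : ℕ → ℕ → ℂ)
    (hc3 : ∀ j, 4 ≤ j → j ≤ n → c 3 j = c3 j)
    (hc'3 : ∀ j, 4 ≤ j → j ≤ n → c' 3 j = c'3 j)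
    (hc : ∀ i j, 4 ≤ i → i < j → j ≤ n → c i j = c'3 i * c3 j)
    (hc' : ∀ i j, 4 ≤ i → i < j → j ≤ n → c' i j = c3 i * c'3 j) :
    ∀ i j k, 3 ≤ i → i < j → j < k → k ≤ n →
      c' i j * c i k * c' j k = c i j * c' i k * c j k :=
  statement12_general n c3 c'3 c c' hc3 hc'3 hc hc'
end

section
/- Let Δ_{5,2} ⊂ ℝ^5 be the hypersimplex, i.e. the convex hull of the ten points Λ_{pq} = e_p + e_q, 1 ≤ p < q ≤ 5, where e_1,…,e_5 is the standard basis. For distinct i, j ∈ {1,…,5} let P_{ij} be the convex hull of {Λ_{ij}} ∪ {Λ_{ik}, Λ_{jk} : k ∉ {i,j}} (the seven-sided pyramid with apex Λ_{ij}) and let K_{ij} be the convex hull of the nine vertices {Λ_{pq} : {p,q} ≠ {i,j}}. Then P_{ij} ∪ K_{ij} = Δ_{5,2} and the relative interiors of P_{ij} and K_{ij} (interiors within the affine hyperplane x_1+⋯+x_5 = 2) are disjoint; that is, the pair {K_{ij}, P_{ij}} is a polyhedral decomposition of Δ_{5,2}. -/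
/-- The vertex `Λ_{pq} = e_p + e_q` of the hypersimplex `Δ_{5,2} ⊂ ℝ⁵`. -/
noncomputable def Lam (p q : Fin 5) : EuclideanSpace ℝ (Fin 5) :=
  EuclideanSpace.single p 1 + EuclideanSpace.single q 1

/-- The hypersimplex `Δ_{5,2}`: the convex hull of the ten points `Λ_{pq}`, `p ≠ q`. -/
noncomputable def hyperSimplex52 : Set (EuclideanSpace ℝ (Fin 5)) :=
  convexHull ℝ {x | ∃ p q : Fin 5, p ≠ q ∧ x = Lam p q}

/-- The seven-sided pyramid `P_{ij}` with apex `Λ_{ij}`: the convex hull of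
`{Λ_{ij}} ∪ {Λ_{ik}, Λ_{jk} : k ∉ {i,j}}`. -/
noncomputable def pyramidP (i j : Fin 5) : Set (EuclideanSpace ℝ (Fin 5)) :=
  convexHull ℝ {x | x = Lam i j ∨ ∃ k, k ≠ i ∧ k ≠ j ∧ (x = Lam i k ∨ x = Lam j k)}

/-- The polytope `K_{ij}` on the nine vertices `{Λ_{pq} : {p,q} ≠ {i,j}}`. -/
noncomputable def polytopeK (i j : Fin 5) : Set (EuclideanSpace ℝ (Fin 5)) :=
  convexHull ℝ
    {x | ∃ p q : Fin 5, p ≠ q ∧ ({p, q} : Set (Fin 5)) ≠ ({i, j} : Set (Fin 5)) ∧ x = Lam p q}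

/-! The affine functional `f x = x i + x j` is `≥ 1` on `P_{ij}` and `≤ 1` on `K_{ij}`. Since
`Δ_{5,2}` is the convex join of `P_{ij}` and `K_{ij}`, each of its points `x` lies on a segment
`[a, b]` with `a ∈ P_{ij}`, `b ∈ K_{ij}`. If `f x ≤ 1`, the segment `[a, x]` meets the slice
`{f = 1}` at some `p`, and `x ∈ [p, b] ⊆ K_{ij}` as soon as `p ∈ K_{ij}` (symmetrically if
`f x ≥ 1`). That holds because the slice `Δ_{5,2} ∩ {f = 1}` is the prism
`conv{e_i, e_j} + conv{e_k : k ∉ {i, j}}`, the convex hull of the vertices `Λ_{ik}, Λ_{jk}` shared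
by both pieces. For the interiors: `K_{ij}` has a vertex `Λ_{kl}` with `f = 0`, which forces
`f < 1` on its relative interior, while `f ≥ 1` on `P_{ij}`. -/

open Set

section Slice

variable {E : Type*} [AddCommGroup E] [Module ℝ E]

lemma mem_of_mem_segment_of_apply_le (f : E →ᵃ[ℝ] ℝ) {c : ℝ} {S : Set E} (hS : Convex ℝ S)
    {a b x : E} (ha : c ≤ f a) (hb : b ∈ S) (hx : x ∈ segment ℝ a b) (hfx : f x ≤ c)
    (hslice : ∀ p ∈ segment ℝ a b, f p = c → p ∈ S) : x ∈ S := by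
  have hc : c ∈ f '' segment ℝ a x := by
    rw [image_segment, segment_symm, segment_eq_Icc (hfx.trans ha)]
    exact ⟨hfx, ha⟩
  obtain ⟨p, hp, hfp⟩ := hc
  have hax := mem_segment_iff_wbtw.1 hx
  have hap := mem_segment_iff_wbtw.1 hp
  have hpS : p ∈ S := hslice p (hax.trans_left hap).mem_segment hfp
  exact hS.segment_subset hpS hb (hax.trans_left_right hap).mem_segment

theorem convexHull_union_eq_union_of_slice (f : E →ᵃ[ℝ] ℝ) (c : ℝ) {A B : Set E}
    (hA : ∀ a ∈ A, c ≤ f a) (hB : ∀ b ∈ B, f b ≤ c)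
    (hslice : ∀ x ∈ convexHull ℝ (A ∪ B), f x = c → x ∈ convexHull ℝ A ∩ convexHull ℝ B) :
    convexHull ℝ (A ∪ B) = convexHull ℝ A ∪ convexHull ℝ B := by
  rcases A.eq_empty_or_nonempty with rfl | hAne
  · simp
  rcases B.eq_empty_or_nonempty with rfl | hBne
  · simp
  refine Subset.antisymm (fun x hx => ?_)
    (union_subset (convexHull_mono subset_union_left) (convexHull_mono subset_union_right))
  have hA' : ∀ a ∈ convexHull ℝ A, c ≤ f a := convexHull_min hA ((convex_Ici c).affine_preimage f)
  have hB' : ∀ b ∈ convexHull ℝ B, f b ≤ c := convexHull_min hB ((convex_Iic c).affine_preimage f)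
  rw [convexHull_union hAne hBne, mem_convexJoin] at hx
  obtain ⟨a, ha, b, hb, hxab⟩ := hx
  have hab : segment ℝ a b ⊆ convexHull ℝ (A ∪ B) :=
    (convex_convexHull ℝ _).segment_subset (convexHull_mono subset_union_left ha)
      (convexHull_mono subset_union_right hb)
  rcases le_total (f x) c with hfx | hfx
  · refine .inr (mem_of_mem_segment_of_apply_le f (convex_convexHull ℝ B) (hA' a ha) hb hxab hfx
      fun p hp hfp => (hslice p (hab hp) hfp).2)
  · refine .inl (mem_of_mem_segment_of_apply_le (-f) (c := -c) (convex_convexHull ℝ A) ?_ ha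
      (segment_symm ℝ a b ▸ hxab) ?_ fun p hp hfp => (hslice p (hab (segment_symm ℝ a b ▸ hp)) ?_).1)
    · simpa using hB' b hb
    · simpa using hfx
    · simpa using hfp

end Slice

section IntrinsicInterior

variable {E : Type*} [NormedAddCommGroup E] [NormedSpace ℝ E]

lemma exists_one_lt_lineMap_mem_of_mem_intrinsicInterior {K : Set E} {x y : E}
    (hx : x ∈ intrinsicInterior ℝ K) (hy : y ∈ K) :
    ∃ t : ℝ, 1 < t ∧ AffineMap.lineMap y x t ∈ K := by
  obtain ⟨z, hz, rfl⟩ := mem_intrinsicInterior.1 hx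
  let φ : ℝ → affineSpan ℝ K := fun t =>
    ⟨AffineMap.lineMap y z t, AffineMap.lineMap_mem t (subset_affineSpan ℝ K hy) z.2⟩
  have hφ : Continuous φ := AffineMap.lineMap_continuous.subtype_mk _
  have hφ1 : φ 1 = z := Subtype.ext (AffineMap.lineMap_apply_one _ _)
  have hnear : ∀ᶠ t in nhds 1, φ t ∈ interior ((↑) ⁻¹' K) :=
    hφ.continuousAt.preimage_mem_nhds (hφ1 ▸ isOpen_interior.mem_nhds hz)
  obtain ⟨t, ht, ht1⟩ :=
    ((hnear.filter_mono nhdsWithin_le_nhds).and (self_mem_nhdsWithin (s := Ioi (1 : ℝ)))).exists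
  exact ⟨t, ht1, interior_subset (s := ((↑) ⁻¹' K : Set (affineSpan ℝ K))) ht⟩

lemma disjoint_intrinsicInterior_of_separated (f : E →ᵃ[ℝ] ℝ) {c : ℝ} {P K : Set E}
    (hP : ∀ x ∈ P, c ≤ f x) (hK : ∀ x ∈ K, f x ≤ c) {y : E} (hy : y ∈ K) (hfy : f y < c) :
    Disjoint (intrinsicInterior ℝ P) (intrinsicInterior ℝ K) := by
  refine disjoint_left.2 fun x hxP hxK => ?_
  have hfx : f x = c :=
    (hK x (intrinsicInterior_subset hxK)).antisymm (hP x (intrinsicInterior_subset hxP))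
  obtain ⟨t, ht, htK⟩ := exists_one_lt_lineMap_mem_of_mem_intrinsicInterior hxK hy
  have := hK _ htK
  rw [AffineMap.apply_lineMap, AffineMap.lineMap_apply_module, hfx, smul_eq_mul, smul_eq_mul] at this
  nlinarith

end IntrinsicInterior

section Coordinates

variable {ι : Type*} [Fintype ι]

noncomputable def coordPairSum (i j : ι) : EuclideanSpace ℝ ι →ᵃ[ℝ] ℝ :=
  ((EuclideanSpace.proj i + EuclideanSpace.proj j : EuclideanSpace ℝ ι →L[ℝ] ℝ) :
    EuclideanSpace ℝ ι →ₗ[ℝ] ℝ).toAffineMap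

@[simp]
lemma coordPairSum_apply (i j : ι) (x : EuclideanSpace ℝ ι) : coordPairSum i j x = x i + x j :=
  rfl

lemma mem_convexHull_of_apply_add_apply_eq_one [DecidableEq ι] {i j : ι} (hij : i ≠ j)
    {x : EuclideanSpace ℝ ι} (hx0 : ∀ k, 0 ≤ x k) (hsum : ∑ k, x k = 2) (hx1 : x i + x j = 1) :
    x ∈ convexHull ℝ {y | ∃ k, k ≠ i ∧ k ≠ j ∧
      (y = EuclideanSpace.single i 1 + EuclideanSpace.single k 1 ∨
        y = EuclideanSpace.single j 1 + EuclideanSpace.single k 1)} := by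
  let e : ι → EuclideanSpace ℝ ι := fun k => EuclideanSpace.single k 1
  let S : Finset ι := {i, j}ᶜ
  have hS : ∀ k, k ∈ S ↔ k ≠ i ∧ k ≠ j := by simp [S]
  have hSsum : ∑ k ∈ S, x k = 1 := by
    rw [← Finset.sum_add_sum_compl {i, j}, Finset.sum_pair hij] at hsum
    linarith
  have hpair : x i • e i + x j • e j ∈ convexHull ℝ {e i, e j} :=
    segment_subset_convexHull (mem_insert _ _) (mem_insert_of_mem _ (mem_singleton _))
      ⟨x i, x j, hx0 i, hx0 j, hx1, rfl⟩
  have hrest : ∑ k ∈ S, x k • e k ∈ convexHull ℝ (e '' S) :=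
    (convex_convexHull ℝ _).sum_mem (fun k _ => hx0 k) hSsum
      fun k hk => subset_convexHull ℝ _ ⟨k, hk, rfl⟩
  have hx : x = (x i • e i + x j • e j) + ∑ k ∈ S, x k • e k := by
    conv_lhs => rw [← (EuclideanSpace.basisFun ι ℝ).sum_repr x, ← Finset.sum_add_sum_compl {i, j},
      Finset.sum_pair hij]
    simp only [EuclideanSpace.basisFun_repr, EuclideanSpace.basisFun_apply, e, S]
  have := add_mem_add hpair hrest
  rw [← convexHull_add, ← hx] at this
  refine convexHull_mono ?_ this
  rintro _ ⟨_, hij', _, ⟨k, hk, rfl⟩, rfl⟩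
  obtain ⟨hki, hkj⟩ := (hS k).1 hk
  rcases hij' with rfl | rfl
  · exact ⟨k, hki, hkj, .inl rfl⟩
  · exact ⟨k, hki, hkj, .inr rfl⟩

end Coordinates

lemma lam_apply (p q m : Fin 5) :
    Lam p q m = (if m = p then 1 else 0) + (if m = q then 1 else 0) := by
  simp [Lam]

lemma hyperSimplex52_subset_nonneg_sum_eq_two :
    hyperSimplex52 ⊆ {x | (∀ k, 0 ≤ x k) ∧ ∑ k, x k = 2} := by
  refine convexHull_min ?_ fun x hx y hy a b ha hb hab => ?_
  · rintro _ ⟨p, q, hpq, rfl⟩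
    refine ⟨fun k => by rw [lam_apply]; positivity, ?_⟩
    simp only [lam_apply, Finset.sum_add_distrib, Finset.sum_ite_eq', Finset.mem_univ,
      if_true, one_add_one_eq_two]
  · simp only [mem_ofPred_eq, PiLp.add_apply, PiLp.smul_apply, smul_eq_mul,
      Finset.sum_add_distrib, ← Finset.mul_sum, hx.2, hy.2]
    exact ⟨fun k => add_nonneg (mul_nonneg ha (hx.1 k)) (mul_nonneg hb (hy.1 k)), by linarith⟩

section Decomposition

variable {i j : Fin 5}

lemma hyperSimplex52_eq_convexHull_union (hij : i ≠ j) :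
    hyperSimplex52 = convexHull ℝ
      ({x | x = Lam i j ∨ ∃ k, k ≠ i ∧ k ≠ j ∧ (x = Lam i k ∨ x = Lam j k)} ∪
        {x | ∃ p q : Fin 5, p ≠ q ∧ ({p, q} : Set (Fin 5)) ≠ {i, j} ∧ x = Lam p q}) := by
  refine congrArg _ (Subset.antisymm ?_ ?_)
  · rintro _ ⟨p, q, hpq, rfl⟩
    by_cases h : ({p, q} : Set (Fin 5)) = {i, j}
    · rcases Set.pair_eq_pair_iff.1 h with ⟨rfl, rfl⟩ | ⟨rfl, rfl⟩
      · exact .inl (.inl rfl)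
      · exact .inl (.inl (by simp [Lam, add_comm]))
    · exact .inr ⟨p, q, hpq, h, rfl⟩
  · rintro _ ((rfl | ⟨k, hki, hkj, rfl | rfl⟩) | ⟨p, q, hpq, -, rfl⟩)
    exacts [⟨i, j, hij, rfl⟩, ⟨i, k, hki.symm, rfl⟩, ⟨j, k, hkj.symm, rfl⟩, ⟨p, q, hpq, rfl⟩]

lemma one_le_coordPairSum_of_mem_pyramidP (hij : i ≠ j) :
    ∀ x ∈ pyramidP i j, 1 ≤ coordPairSum i j x := by
  refine convexHull_min (t := coordPairSum i j ⁻¹' Ici 1) ?_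
    ((convex_Ici 1).affine_preimage _)
  rintro _ (rfl | ⟨k, hki, hkj, rfl | rfl⟩)
  · simp [lam_apply, hij, hij.symm]
  all_goals simp [lam_apply, hij, hij.symm, hki.symm, hkj.symm]

lemma coordPairSum_le_one_of_mem_polytopeK (hij : i ≠ j) :
    ∀ x ∈ polytopeK i j, coordPairSum i j x ≤ 1 := by
  refine convexHull_min (t := coordPairSum i j ⁻¹' Iic 1) ?_
    ((convex_Iic 1).affine_preimage _)
  rintro _ ⟨p, q, hpq, hne, rfl⟩
  simp only [mem_preimage, mem_Iic, coordPairSum_apply, lam_apply]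
  split_ifs <;> subst_vars <;> simp_all [Set.pair_comm]

lemma mem_pyramidP_inter_polytopeK (hij : i ≠ j) {x : EuclideanSpace ℝ (Fin 5)}
    (hx : x ∈ hyperSimplex52) (hx1 : x i + x j = 1) : x ∈ pyramidP i j ∩ polytopeK i j := by
  have hM := mem_convexHull_of_apply_add_apply_eq_one hij (hyperSimplex52_subset_nonneg_sum_eq_two hx).1
    (hyperSimplex52_subset_nonneg_sum_eq_two hx).2 hx1
  refine ⟨convexHull_mono (fun y hy => .inr hy) hM, convexHull_mono ?_ hM⟩
  rintro _ ⟨k, hki, hkj, rfl | rfl⟩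
  · exact ⟨i, k, hki.symm, by rw [Ne, Set.pair_eq_pair_iff]; tauto, rfl⟩
  · exact ⟨j, k, hkj.symm, by rw [Ne, Set.pair_eq_pair_iff]; tauto, rfl⟩

lemma exists_mem_polytopeK_coordPairSum_lt_one (hij : i ≠ j) :
    ∃ y ∈ polytopeK i j, coordPairSum i j y < 1 := by
  obtain ⟨k, l, hkl, hki, hkj, hli, hlj⟩ :
      ∃ k l : Fin 5, k ≠ l ∧ k ≠ i ∧ k ≠ j ∧ l ≠ i ∧ l ≠ j := by
    revert i j; decide
  refine ⟨Lam k l, subset_convexHull ℝ _ ⟨k, l, hkl, ?_, rfl⟩, ?_⟩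
  · rw [Ne, Set.pair_eq_pair_iff]; tauto
  · simp [lam_apply, hki.symm, hkj.symm, hli.symm, hlj.symm]

end Decomposition

/-- For distinct `i, j ∈ {1,…,5}`, the pair `{K_{ij}, P_{ij}}` is a
polyhedral decomposition of `Δ_{5,2}`: `P_{ij} ∪ K_{ij} = Δ_{5,2}` and the relative
(intrinsic) interiors of `P_{ij}` and `K_{ij}` are disjoint. -/
theorem statement14 (i j : Fin 5) (hij : i ≠ j) :
    pyramidP i j ∪ polytopeK i j = hyperSimplex52 ∧
    Disjoint (intrinsicInterior ℝ (pyramidP i j)) (intrinsicInterior ℝ (polytopeK i j)) := by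
  have hP := one_le_coordPairSum_of_mem_pyramidP hij
  have hK := coordPairSum_le_one_of_mem_polytopeK hij
  have hΔ := hyperSimplex52_eq_convexHull_union hij
  obtain ⟨y, hyK, hy⟩ := exists_mem_polytopeK_coordPairSum_lt_one hij
  refine ⟨?_, disjoint_intrinsicInterior_of_separated _ hP hK hyK hy⟩
  rw [hΔ, convexHull_union_eq_union_of_slice (coordPairSum i j) 1
    (fun v hv => hP v (subset_convexHull ℝ _ hv)) (fun v hv => hK v (subset_convexHull ℝ _ hv))
    fun x hx hx1 => mem_pyramidP_inter_polytopeK hij (hΔ ▸ hx) hx1]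
  rfl
end
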